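/- For a radial function f on ℝ² (identified with f(r) on (0,∞)) with f and r f'(r) in L^p with respect to the measure r dr, one has ‖f‖_{L^p} ≤ C ‖r f_r‖_{L^p} for 1 ≤ p < ∞, provided f(r) → 0 as r → ∞. -/

import Mathlib

/-!
Since `f` vanishes at infinity, `|f r| ≤ ∫_r^∞ |f'|`. For `p > 1`, Hölder's inequality against
`s⁻¹ ∈ L^q(r, ∞)` gives `(∫_r^∞ g)^p r ≤ (p - 1)^(p - 1) ∫_r^∞ (s g(s))^p ds` (for `p = 1`,
where `0 ^ 0 = 1`, this is just `r ≤ s`). Integrating in `r` over `(0, ∞)`, Tonelli turns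
`∫_0^∞ ∫_r^∞ h(s) ds dr` into `∫_0^∞ h(s) s ds`. With `g = |f'|` this is the inequality with
`C = (p - 1)^((p - 1) / p)`.
-/

open MeasureTheory Set Filter Topology
open scoped ENNReal

lemma lintegral_Ioi_lintegral_Ioi {H : ℝ → ℝ≥0∞} (hH : Measurable H) (a : ℝ) :
    ∫⁻ r in Ioi a, ∫⁻ s in Ioi r, H s = ∫⁻ s in Ioi a, H s * ENNReal.ofReal (s - a) := by
  have hmeas : Measurable (Function.uncurry fun r s : ℝ => (Ioi r).indicator H s) :=
    (hH.comp measurable_snd).indicator (measurableSet_lt measurable_fst measurable_snd)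
  calc ∫⁻ r in Ioi a, ∫⁻ s in Ioi r, H s
      = ∫⁻ r in Ioi a, ∫⁻ s in Ioi a, (Ioi r).indicator H s := by
        refine setLIntegral_congr_fun measurableSet_Ioi fun r hr => ?_
        rw [lintegral_indicator measurableSet_Ioi, Measure.restrict_restrict measurableSet_Ioi,
          Ioi_inter_Ioi, sup_eq_left.2 (le_of_lt hr)]
    _ = ∫⁻ s in Ioi a, ∫⁻ r in Ioi a, (Ioi r).indicator H s :=
        lintegral_lintegral_swap hmeas.aemeasurable
    _ = ∫⁻ s in Ioi a, H s * ENNReal.ofReal (s - a) := by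
        refine setLIntegral_congr_fun measurableSet_Ioi fun s hs => ?_
        have : ∀ r, (Ioi r).indicator H s = (Iio s).indicator (fun _ => H s) r := fun r => rfl
        simp_rw [this]
        rw [lintegral_indicator_const measurableSet_Iio, Measure.restrict_apply measurableSet_Iio,
          Iio_inter_Ioi, Real.volume_Ioo]

lemma lintegral_Ioi_rpow_neg {q r : ℝ} (hq : 1 < q) (hr : 0 < r) :
    ∫⁻ s in Ioi r, ENNReal.ofReal (s ^ (-q)) = ENNReal.ofReal (r ^ (1 - q) / (q - 1)) := by
  rw [← ofReal_integral_eq_lintegral_ofReal (integrableOn_Ioi_rpow_of_lt (by linarith) hr)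
    (ae_restrict_of_forall_mem measurableSet_Ioi fun s (hs : r < s) =>
      Real.rpow_nonneg (hr.trans hs).le _),
    integral_Ioi_rpow_of_lt (by linarith) hr, ← neg_div_neg_eq, neg_neg, neg_add_eq_sub, neg_sub]

lemma enorm_le_lintegral_Ioi_enorm_deriv {E : Type*} [NormedAddCommGroup E] [NormedSpace ℝ E]
    [CompleteSpace E] {f : ℝ → E} {a : ℝ} (hf : ∀ x ∈ Ici a, DifferentiableAt ℝ f x)
    (hlim : Tendsto f atTop (𝓝 0)) :
    ‖f a‖ₑ ≤ ∫⁻ x in Ioi a, ‖deriv f x‖ₑ := by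
  by_cases hint : IntegrableOn (deriv f) (Ioi a)
  · have hftc := integral_Ioi_of_hasDerivAt_of_tendsto' (fun x hx => (hf x hx).hasDerivAt)
      hint hlim
    rw [zero_sub] at hftc
    calc ‖f a‖ₑ = ‖∫ x in Ioi a, deriv f x‖ₑ := by rw [hftc, enorm_neg]
      _ ≤ ∫⁻ x in Ioi a, ‖deriv f x‖ₑ := enorm_integral_le_lintegral_enorm _
  · have : ¬ HasFiniteIntegral (deriv f) (volume.restrict (Ioi a)) := fun h =>
      hint ⟨(stronglyMeasurable_deriv f).aestronglyMeasurable, h⟩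
    rw [HasFiniteIntegral, not_lt, top_le_iff] at this
    rw [this]
    exact le_top

lemma rpow_lintegral_Ioi_mul_le {p : ℝ} (hp : 1 ≤ p) {g : ℝ → ℝ≥0∞} (hg : AEMeasurable g)
    {r : ℝ} (hr : 0 < r) :
    (∫⁻ s in Ioi r, g s) ^ p * ENNReal.ofReal r ≤
      ENNReal.ofReal ((p - 1) ^ (p - 1)) * ∫⁻ s in Ioi r, (g s * ENNReal.ofReal s) ^ p := by
  rcases hp.eq_or_lt with rfl | hp
  · simp only [sub_self, Real.rpow_zero, ENNReal.ofReal_one, one_mul, ENNReal.rpow_one]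
    rw [← lintegral_mul_const' _ _ ENNReal.ofReal_ne_top]
    exact setLIntegral_mono' measurableSet_Ioi fun s (hs : r < s) => by gcongr
  set q := p.conjExponent
  have hpq : p.HolderConjugate q := .conjExponent hp
  have hpq' : (p - 1) * (q - 1) = 1 := by linarith [hpq.sub_one_mul_conj]
  have hg_eq : ∫⁻ s in Ioi r, g s =
      ∫⁻ s in Ioi r, g s * ENNReal.ofReal s * ENNReal.ofReal s⁻¹ :=
    setLIntegral_congr_fun measurableSet_Ioi fun s hs => by
      have hs0 : 0 < s := hr.trans hs
      rw [mul_assoc, ← ENNReal.ofReal_mul hs0.le, mul_inv_cancel₀ hs0.ne',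
        ENNReal.ofReal_one, mul_one]
  have tail : ∫⁻ s in Ioi r, ENNReal.ofReal s⁻¹ ^ q = ENNReal.ofReal ((p - 1) * r ^ (1 - q)) :=
    calc ∫⁻ s in Ioi r, ENNReal.ofReal s⁻¹ ^ q = ∫⁻ s in Ioi r, ENNReal.ofReal (s ^ (-q)) :=
          setLIntegral_congr_fun measurableSet_Ioi fun s (hs : r < s) => by
            have hs0 : 0 < s := hr.trans hs
            rw [ENNReal.ofReal_rpow_of_nonneg (inv_nonneg.2 hs0.le) hpq.symm.nonneg,
              Real.inv_rpow hs0.le, ← Real.rpow_neg hs0.le]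
      _ = ENNReal.ofReal (r ^ (1 - q) / (q - 1)) := lintegral_Ioi_rpow_neg hpq.symm.lt hr
      _ = ENNReal.ofReal ((p - 1) * r ^ (1 - q)) := by
          rw [div_eq_mul_inv, mul_comm, eq_inv_of_mul_eq_one_left hpq']
  have holder : ∫⁻ s in Ioi r, g s * ENNReal.ofReal s * ENNReal.ofReal s⁻¹ ≤
      (∫⁻ s in Ioi r, (g s * ENNReal.ofReal s) ^ p) ^ (1 / p) *
        (∫⁻ s in Ioi r, ENNReal.ofReal s⁻¹ ^ q) ^ (1 / q) :=
    ENNReal.lintegral_mul_le_Lp_mul_Lq _ hpq (by fun_prop) (by fun_prop)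
  rw [tail] at holder
  calc (∫⁻ s in Ioi r, g s) ^ p * ENNReal.ofReal r
      ≤ ((∫⁻ s in Ioi r, (g s * ENNReal.ofReal s) ^ p) ^ (1 / p) *
          ENNReal.ofReal ((p - 1) * r ^ (1 - q)) ^ (1 / q)) ^ p * ENNReal.ofReal r := by
        rw [hg_eq]; gcongr
    _ = (∫⁻ s in Ioi r, (g s * ENNReal.ofReal s) ^ p) *
          (ENNReal.ofReal ((p - 1) * r ^ (1 - q)) ^ (p - 1) * ENNReal.ofReal r) := by
        rw [ENNReal.mul_rpow_of_nonneg _ _ hpq.nonneg, ← ENNReal.rpow_mul, ← ENNReal.rpow_mul,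
          one_div_mul_cancel hpq.ne_zero, ENNReal.rpow_one, one_div_mul_eq_div,
          hpq.div_conj_eq_sub_one, mul_assoc]
    _ = _ := by
        have hT : 0 ≤ (p - 1) * r ^ (1 - q) := by have := hpq.sub_one_pos; positivity
        rw [mul_comm, ENNReal.ofReal_rpow_of_nonneg hT hpq.sub_one_pos.le,
          ← ENNReal.ofReal_mul (by positivity), Real.mul_rpow hpq.sub_one_pos.le (by positivity),
          ← Real.rpow_mul hr.le, show (1 - q) * (p - 1) = -1 by linarith, Real.rpow_neg_one,
          mul_assoc, inv_mul_cancel₀ hr.ne', mul_one]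

theorem lintegral_rpow_lintegral_Ioi_mul_le {p : ℝ} (hp : 1 ≤ p) {g : ℝ → ℝ≥0∞}
    (hg : Measurable g) :
    ∫⁻ r in Ioi 0, (∫⁻ s in Ioi r, g s) ^ p * ENNReal.ofReal r ≤
      ENNReal.ofReal ((p - 1) ^ (p - 1)) *
        ∫⁻ s in Ioi 0, (g s * ENNReal.ofReal s) ^ p * ENNReal.ofReal s := by
  calc ∫⁻ r in Ioi 0, (∫⁻ s in Ioi r, g s) ^ p * ENNReal.ofReal r
      ≤ ∫⁻ r in Ioi 0, ENNReal.ofReal ((p - 1) ^ (p - 1)) *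
          ∫⁻ s in Ioi r, (g s * ENNReal.ofReal s) ^ p :=
        setLIntegral_mono' measurableSet_Ioi fun r hr =>
          rpow_lintegral_Ioi_mul_le hp hg.aemeasurable hr
    _ = _ := by
        rw [lintegral_const_mul' _ _ ENNReal.ofReal_ne_top,
          lintegral_Ioi_lintegral_Ioi (by fun_prop) 0]
        simp_rw [sub_zero]

lemma enorm_abs_rpow_mul {x r p : ℝ} (hr : 0 ≤ r) (hp : 0 ≤ p) :
    ‖|x| ^ p * r‖ₑ = ‖x‖ₑ ^ p * ENNReal.ofReal r := by
  rw [Real.enorm_of_nonneg (by positivity), ENNReal.ofReal_mul (by positivity),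
    ← ENNReal.ofReal_rpow_of_nonneg (abs_nonneg x) hp, Real.enorm_eq_ofReal_abs]

theorem integral_Ioi_abs_rpow_mul_le {p : ℝ} (hp : 1 ≤ p) {f : ℝ → ℝ}
    (hf : ∀ r ∈ Ioi 0, DifferentiableAt ℝ f r)
    (hf' : IntegrableOn (fun r => |r * deriv f r| ^ p * r) (Ioi 0))
    (hlim : Tendsto f atTop (𝓝 0)) :
    ∫ r in Ioi 0, |f r| ^ p * r ≤ (p - 1) ^ (p - 1) * ∫ r in Ioi 0, |r * deriv f r| ^ p * r := by
  have hp0 : 0 ≤ p := by linarith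
  have hK : 0 ≤ (p - 1) ^ (p - 1) := Real.rpow_nonneg (by linarith) _
  have hlhs : ∫⁻ r in Ioi 0, ‖|f r| ^ p * r‖ₑ ≤
      ∫⁻ r in Ioi 0, (∫⁻ s in Ioi r, ‖deriv f s‖ₑ) ^ p * ENNReal.ofReal r :=
    setLIntegral_mono' measurableSet_Ioi fun r (hr : 0 < r) => by
      rw [enorm_abs_rpow_mul hr.le hp0]
      gcongr
      exact enorm_le_lintegral_Ioi_enorm_deriv (fun x hx => hf x (hr.trans_le hx)) hlim
  have hrhs : ∫⁻ s in Ioi 0, (‖deriv f s‖ₑ * ENNReal.ofReal s) ^ p * ENNReal.ofReal s =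
      ENNReal.ofReal (∫ s in Ioi 0, |s * deriv f s| ^ p * s) := by
    rw [ofReal_integral_eq_lintegral_ofReal hf'
      (ae_restrict_of_forall_mem measurableSet_Ioi fun s (hs : 0 < s) => by positivity)]
    refine setLIntegral_congr_fun measurableSet_Ioi fun s (hs : 0 < s) => ?_
    rw [← Real.enorm_of_nonneg (by positivity : 0 ≤ |s * deriv f s| ^ p * s),
      enorm_abs_rpow_mul hs.le hp0, enorm_mul, Real.enorm_of_nonneg hs.le,
      mul_comm (ENNReal.ofReal s)]
  refine (ENNReal.ofReal_le_ofReal_iff (mul_nonneg hK (setIntegral_nonneg measurableSet_Ioi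
    fun s (hs : 0 < s) => by positivity))).1 ?_
  calc ENNReal.ofReal (∫ r in Ioi 0, |f r| ^ p * r) ≤ ‖∫ r in Ioi 0, |f r| ^ p * r‖ₑ := by
        rw [Real.enorm_eq_ofReal_abs]; exact ENNReal.ofReal_le_ofReal (le_abs_self _)
    _ ≤ ∫⁻ r in Ioi 0, ‖|f r| ^ p * r‖ₑ := enorm_integral_le_lintegral_enorm _
    _ ≤ ∫⁻ r in Ioi 0, (∫⁻ s in Ioi r, ‖deriv f s‖ₑ) ^ p * ENNReal.ofReal r := hlhs
    _ ≤ ENNReal.ofReal ((p - 1) ^ (p - 1)) *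
          ∫⁻ s in Ioi 0, (‖deriv f s‖ₑ * ENNReal.ofReal s) ^ p * ENNReal.ofReal s :=
        lintegral_rpow_lintegral_Ioi_mul_le hp (stronglyMeasurable_deriv f).measurable.enorm
    _ = _ := by rw [hrhs, ← ENNReal.ofReal_mul hK]

theorem stmt2 (p : ℝ) (hp1 : 1 ≤ p) :
    ∃ C > 0, ∀ f : ℝ → ℝ,
      (∀ r ∈ Set.Ioi (0:ℝ), DifferentiableAt ℝ f r) →
      IntegrableOn (fun r => |f r| ^ p * r) (Set.Ioi 0) →
      IntegrableOn (fun r => |r * deriv f r| ^ p * r) (Set.Ioi 0) →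
      Filter.Tendsto f Filter.atTop (nhds 0) →
      (∫ r in Set.Ioi (0:ℝ), |f r| ^ p * r) ^ (1/p) ≤
        C * (∫ r in Set.Ioi (0:ℝ), |r * deriv f r| ^ p * r) ^ (1/p) := by
  have hK : 0 < (p - 1) ^ (p - 1) := by
    rcases hp1.eq_or_lt with rfl | hp
    · simp
    · exact Real.rpow_pos_of_pos (sub_pos.2 hp) _
  refine ⟨((p - 1) ^ (p - 1)) ^ (1 / p), Real.rpow_pos_of_pos hK _, fun f hf _ hf' hlim => ?_⟩
  have hrhs : 0 ≤ ∫ r in Ioi 0, |r * deriv f r| ^ p * r :=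
    setIntegral_nonneg measurableSet_Ioi fun r (hr : 0 < r) => by positivity
  calc (∫ r in Ioi 0, |f r| ^ p * r) ^ (1 / p)
      ≤ ((p - 1) ^ (p - 1) * ∫ r in Ioi 0, |r * deriv f r| ^ p * r) ^ (1 / p) :=
        Real.rpow_le_rpow
          (setIntegral_nonneg measurableSet_Ioi fun r (hr : 0 < r) => by positivity)
          (integral_Ioi_abs_rpow_mul_le hp1 hf hf' hlim) (one_div_nonneg.2 (by linarith))
    _ = _ := Real.mul_rpow hK.le hrhs
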